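/- Let f : [0,∞) → (0,∞) be càdlàg without negative jumps, and define T₀(f) = inf{t ≥ 0 : f(t) = 0} (possibly ∞), i(t) = ∫₀^{t∧T₀} ds / f(s), and let c be the right-continuous inverse of i, c(y) = inf{t : i(t) > y}. Then h = f ∘ c satisfies h(t) = f(∫₀ᵗ h(s) ds) for all t < i(T₀), and c(t) = ∫₀ᵗ h(s) ds on that interval. (Lamperti transformation as a solution to the time-change equation.) -/

import Mathlib

/-!
On `[0, ∞)` the additive functional `i` is continuous and strictly increasing, with right
derivative `1 / f` because `f` is right-continuous. On the range of `i`, its right-continuous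
inverse `c` is therefore a genuine continuous inverse, and the inverse function rule gives it
the right derivative `f ∘ c`, which is itself right-continuous. So `c` and `∫₀^· f ∘ c` are
continuous, vanish at `0` and have the same right derivative; they coincide by uniqueness for
right derivatives.
-/

open Set MeasureTheory Filter Topology

theorem HasDerivWithinAt.of_local_left_inverse {𝕜 : Type*} [NontriviallyNormedField 𝕜]
    {f g : 𝕜 → 𝕜} {f' a : 𝕜} {s t : Set 𝕜}
    (hg : Tendsto g (𝓝[s] a) (𝓝[t] (g a))) (hf : HasDerivWithinAt f f' t (g a)) (hf' : f' ≠ 0)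
    (ha : a ∈ s)
    (hfg : ∀ᶠ y in 𝓝[s] a, f (g y) = y) : HasDerivWithinAt g f'⁻¹ s a :=
  HasFDerivWithinAt.of_local_left_inverse
    (f' := ContinuousLinearEquiv.unitsEquivAut 𝕜 (Units.mk0 f' hf')) hg hf ha hfg

theorem StrictMonoOn.continuousWithinAt_of_eventually_rightInverse {α β : Type*}
    [LinearOrder α] [TopologicalSpace α] [OrderTopology α]
    [LinearOrder β] [TopologicalSpace β] [OrderTopology β]
    {i : α → β} {c : β → α} {s : Set α} {t : Set β} {x : β}
    (hi : StrictMonoOn i s) (hs : s.OrdConnected) (hx : x ∈ t)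
    (hcs : ∀ᶠ y in 𝓝[t] x, c y ∈ s) (hic : ∀ᶠ y in 𝓝[t] x, i (c y) = y) :
    ContinuousWithinAt c t x := by
  have hcx : c x ∈ s := hcs.self_of_nhdsWithin hx
  have hix : i (c x) = x := hic.self_of_nhdsWithin hx
  refine tendsto_order.2 ⟨fun b hb => ?_, fun b hb => ?_⟩
  · by_cases hbs : b ∈ s
    · have hbx : i b < x := hix ▸ hi hbs hcx hb
      filter_upwards [hcs, hic, mem_nhdsWithin_of_mem_nhds (Ioi_mem_nhds hbx)]
        with y hys hiy hy
      by_contra! hle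
      exact (hiy ▸ hy).not_ge (hi.monotoneOn hys hbs hle)
    · -- `s` is order-connected, so no `c y ∈ s` lies beyond `b ∉ s` as seen from `c x`
      filter_upwards [hcs] with y hys
      by_contra! hle
      exact hbs (hs.out hys hcx ⟨hle, hb.le⟩)
  · by_cases hbs : b ∈ s
    · have hxb : x < i b := hix ▸ hi hcx hbs hb
      filter_upwards [hcs, hic, mem_nhdsWithin_of_mem_nhds (Iio_mem_nhds hxb)]
        with y hys hiy hy
      by_contra! hle
      exact (hiy ▸ hy).not_ge (hi.monotoneOn hbs hys hle)
    · filter_upwards [hcs] with y hys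
      by_contra! hle
      exact hbs (hs.out hcx hys ⟨hb.le, hle⟩)

section Primitive

variable {E : Type*} [NormedAddCommGroup E] [NormedSpace ℝ E] {g : ℝ → E}

theorem continuousOn_primitive_Ici (hg : ∀ t ≥ 0, IntervalIntegrable g volume 0 t) :
    ContinuousOn (fun t => ∫ s in (0:ℝ)..t, g s) (Ici 0) := by
  intro x hx
  have hx1 : (0:ℝ) ≤ x + 1 := by linarith [mem_Ici.1 hx]
  have hIcc : ContinuousOn (fun t => ∫ s in (0:ℝ)..t, g s) (Icc 0 (x + 1)) := by
    simpa only [uIcc_of_le hx1] using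
      intervalIntegral.continuousOn_primitive_interval' (hg _ hx1) left_mem_uIcc
  refine (hIcc x ⟨hx, by linarith⟩).mono_of_mem_nhdsWithin ?_
  rw [← Ici_inter_Iic]
  exact inter_mem_nhdsWithin _ (Iic_mem_nhds (by linarith))

theorem hasDerivWithinAt_primitive_Ici [CompleteSpace E]
    (hg : ∀ t ≥ 0, IntervalIntegrable g volume 0 t)
    {a : ℝ} (ha : 0 ≤ a) (hga : ContinuousWithinAt g (Ici a) a) :
    HasDerivWithinAt (fun t => ∫ s in (0:ℝ)..t, g s) (g a) (Ici a) a :=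
  intervalIntegral.integral_hasDerivWithinAt_right (hg a ha)
    ⟨Ioc a (a + 1), Ioc_mem_nhdsGT (by linarith),
      ((hg _ (by linarith)).1.mono_set (Ioc_subset_Ioc_left ha)).aestronglyMeasurable⟩
    (hga.mono Ioi_subset_Ici_self)

theorem strictMonoOn_primitive_of_pos {g : ℝ → ℝ}
    (hg : ∀ t ≥ 0, IntervalIntegrable g volume 0 t) (hpos : ∀ t ≥ 0, 0 < g t) :
    StrictMonoOn (fun t => ∫ s in (0:ℝ)..t, g s) (Ici 0) := by
  intro a ha b hb hab
  have hab_int : IntervalIntegrable g volume a b := (hg a ha).symm.trans (hg b hb)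
  have hpos_ab : 0 < ∫ s in a..b, g s :=
    intervalIntegral.intervalIntegral_pos_of_pos_on hab_int
      (fun x hx => hpos x (le_trans ha hx.1.le)) hab
  have hsplit := intervalIntegral.integral_add_adjacent_intervals (hg a ha) hab_int
  change ∫ s in (0:ℝ)..a, g s < ∫ s in (0:ℝ)..b, g s
  linarith

end Primitive

/-- Since `sInf ∅ = 0` in `ℝ`, this is `0` (not `∞`) above the range of `i`. -/
noncomputable def rightContInv (i : ℝ → ℝ) (y : ℝ) : ℝ := sInf {t : ℝ | 0 ≤ t ∧ y < i t}

theorem rightContInv_nonneg (i : ℝ → ℝ) (y : ℝ) : 0 ≤ rightContInv i y := by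
  rcases eq_empty_or_nonempty {t : ℝ | 0 ≤ t ∧ y < i t} with hempty | hne
  · simp [rightContInv, hempty]
  · exact le_csInf hne fun t ht => ht.1

theorem image_Ici_mem_nhdsWithin_Ici {i : ℝ → ℝ} (hcont : ContinuousOn i (Ici 0)) {u x : ℝ}
    (hu : 0 ≤ u) (hx : x ∈ Ico (i 0) (i u)) : i '' Ici 0 ∈ 𝓝[Ici (i 0)] x := by
  have hIco : Ico (i 0) (i u) ⊆ i '' Ici 0 :=
    (intermediate_value_Ico hu (hcont.mono Icc_subset_Ici_self)).trans
      (image_mono Ico_subset_Ici_self)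
  refine Filter.mem_of_superset (inter_mem_nhdsWithin _ (Iio_mem_nhds hx.2)) ?_
  exact fun y hy => hIco ⟨hy.1, hy.2⟩

namespace StrictMonoOn

variable {i : ℝ → ℝ}

theorem rightContInv_apply (hi : StrictMonoOn i (Ici 0)) {s : ℝ} (hs : 0 ≤ s) :
    rightContInv i (i s) = s := by
  have hset : {t : ℝ | 0 ≤ t ∧ i s < i t} = Ioi s := by
    ext t
    refine ⟨fun ⟨ht, hst⟩ => (hi.lt_iff_lt hs ht).1 hst, fun hst => ?_⟩
    have ht : 0 ≤ t := hs.trans hst.le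
    exact ⟨ht, hi hs ht hst⟩
  rw [rightContInv, hset, csInf_Ioi]

theorem apply_rightContInv (hi : StrictMonoOn i (Ici 0)) {y : ℝ} (hy : y ∈ i '' Ici 0) :
    i (rightContInv i y) = y := by
  obtain ⟨s, hs, rfl⟩ := hy
  rw [hi.rightContInv_apply hs]

theorem continuousWithinAt_rightContInv (hi : StrictMonoOn i (Ici 0)) {t : Set ℝ} {x : ℝ}
    (hx : x ∈ t) (hrange : i '' Ici 0 ∈ 𝓝[t] x) : ContinuousWithinAt (rightContInv i) t x :=
  hi.continuousWithinAt_of_eventually_rightInverse ordConnected_Ici hx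
    (Eventually.of_forall fun y => rightContInv_nonneg i y)
    (Filter.mem_of_superset hrange fun _ => hi.apply_rightContInv)

theorem tendsto_rightContInv_nhdsGE (hi : StrictMonoOn i (Ici 0)) {x : ℝ}
    (hrange : i '' Ici 0 ∈ 𝓝[≥] x) :
    Tendsto (rightContInv i) (𝓝[≥] x) (𝓝[≥] (rightContInv i x)) := by
  refine tendsto_nhdsWithin_iff.2
    ⟨hi.continuousWithinAt_rightContInv self_mem_Ici hrange, ?_⟩
  have hx : x ∈ i '' Ici 0 := mem_of_mem_nhdsWithin self_mem_Ici hrange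
  filter_upwards [hrange, self_mem_nhdsWithin] with y hy hxy
  rw [mem_Ici, ← hi.le_iff_le (rightContInv_nonneg i x) (rightContInv_nonneg i y),
    hi.apply_rightContInv hx, hi.apply_rightContInv hy]
  exact hxy

theorem hasDerivWithinAt_rightContInv (hi : StrictMonoOn i (Ici 0)) {x d : ℝ}
    (hrange : i '' Ici 0 ∈ 𝓝[≥] x)
    (hd : HasDerivWithinAt i d (Ici (rightContInv i x)) (rightContInv i x)) (hd0 : d ≠ 0) :
    HasDerivWithinAt (rightContInv i) d⁻¹ (Ici x) x :=
  hd.of_local_left_inverse (hi.tendsto_rightContInv_nhdsGE hrange) hd0 self_mem_Ici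
    (Filter.mem_of_superset hrange fun _ => hi.apply_rightContInv)

end StrictMonoOn

theorem rightContInv_eq_integral {f i : ℝ → ℝ} (hi : StrictMonoOn i (Ici 0)) (hi0 : i 0 = 0)
    (hcont : ContinuousOn i (Ici 0)) (hderiv : ∀ a ≥ 0, HasDerivWithinAt i (f a)⁻¹ (Ici a) a)
    (hf_rc : ∀ a ≥ 0, ContinuousWithinAt f (Ici a) a) (hf_ne : ∀ a ≥ 0, f a ≠ 0)
    (hint : ∀ t ≥ 0, IntervalIntegrable (f ∘ rightContInv i) volume 0 t)
    {t u : ℝ} (ht : 0 ≤ t) (hu : 0 ≤ u) (htu : t < i u) :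
    rightContInv i t = ∫ s in (0:ℝ)..t, f (rightContInv i s) := by
  have hrange : ∀ x ∈ Icc 0 t, i '' Ici 0 ∈ 𝓝[Ici 0] x := fun x hx => by
    simpa only [hi0] using
      image_Ici_mem_nhdsWithin_Ici hcont hu ⟨hi0.le.trans hx.1, hx.2.trans_lt htu⟩
  have hrange_ge : ∀ x ∈ Ico 0 t, i '' Ici 0 ∈ 𝓝[≥] x := fun x hx =>
    nhdsWithin_mono x (Ici_subset_Ici.2 hx.1) (hrange x (Ico_subset_Icc_self hx))
  have hderiv_c : ∀ x ∈ Ico 0 t,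
      HasDerivWithinAt (rightContInv i) (f (rightContInv i x)) (Ici x) x := fun x hx => by
    have hcx := rightContInv_nonneg i x
    simpa only [inv_inv] using hi.hasDerivWithinAt_rightContInv (hrange_ge x hx)
      (hderiv _ hcx) (inv_ne_zero (hf_ne _ hcx))
  have hderiv_integral : ∀ x ∈ Ico 0 t,
      HasDerivWithinAt (fun v => ∫ s in (0:ℝ)..v, f (rightContInv i s))
        (f (rightContInv i x)) (Ici x) x := fun x hx =>
    hasDerivWithinAt_primitive_Ici hint hx.1 ((hf_rc _ (rightContInv_nonneg i x)).tendsto.comp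
      (hi.tendsto_rightContInv_nhdsGE (hrange_ge x hx)))
  have hc0 : rightContInv i 0 = 0 := by
    simpa only [hi0] using hi.rightContInv_apply le_rfl
  exact eq_of_has_deriv_right_eq hderiv_c hderiv_integral
    (fun x hx => hi.continuousWithinAt_rightContInv hx
      (nhdsWithin_mono x Icc_subset_Ici_self (hrange x hx)))
    ((continuousOn_primitive_Ici hint).mono Icc_subset_Ici_self) (by simp [hc0]) t ⟨ht, le_rfl⟩

theorem lamperti_transform_solves_general
    (f : ℝ → ℝ)
    (hf_rc : ∀ t ≥ (0:ℝ), ContinuousWithinAt f (Ici t) t)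
    (hf_pos : ∀ t ≥ (0:ℝ), 0 < f t)
    (i c h : ℝ → ℝ)
    (hi : ∀ t, i t = ∫ s in (0:ℝ)..t, (f s)⁻¹)
    (hi_int : ∀ t ≥ (0:ℝ), IntervalIntegrable (fun s => (f s)⁻¹) volume 0 t)
    (hc : ∀ y, c y = sInf {t : ℝ | 0 ≤ t ∧ y < i t})
    (hh : h = f ∘ c)
    (hh_int : ∀ t ≥ (0:ℝ), IntervalIntegrable h volume 0 t) :
    ∀ t ≥ (0:ℝ), (∃ u ≥ (0:ℝ), t < i u) →
      h t = f (∫ s in (0:ℝ)..t, h s) ∧ c t = ∫ s in (0:ℝ)..t, h s := by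
  rintro t ht ⟨u, hu, htu⟩
  obtain rfl : c = rightContInv i := funext hc
  subst hh
  have hi_eq : i = fun t => ∫ s in (0:ℝ)..t, (f s)⁻¹ := funext hi
  have hmono : StrictMonoOn i (Ici 0) :=
    hi_eq ▸ strictMonoOn_primitive_of_pos hi_int fun s hs => inv_pos.2 (hf_pos s hs)
  have hderiv : ∀ a ≥ 0, HasDerivWithinAt i (f a)⁻¹ (Ici a) a := by
    rw [hi_eq]
    exact fun a ha =>
      hasDerivWithinAt_primitive_Ici hi_int ha ((hf_rc a ha).inv₀ (hf_pos a ha).ne')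
  have hc_eq := rightContInv_eq_integral hmono (by simp [hi])
    (hi_eq ▸ continuousOn_primitive_Ici hi_int) hderiv hf_rc (fun a ha => (hf_pos a ha).ne')
    hh_int ht hu htu
  exact ⟨congrArg f hc_eq, hc_eq⟩

/-- Lamperti transformation: let `f` be càdlàg without negative
jumps and strictly positive on `[0,∞)` (so its hitting time of `0` is infinite),
`i(t) = ∫₀ᵗ ds/f(s)`, `c` the right-continuous inverse of `i`, and `h = f ∘ c`.
Then for every `t ≥ 0` in the range of `i` (i.e. `t < i(T₀) = sup i`),
`h(t) = f(∫₀ᵗ h(s) ds)` and `c(t) = ∫₀ᵗ h(s) ds`. -/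
theorem lamperti_transform_solves
    (f fm : ℝ → ℝ)
    (hf_rc : ∀ t ≥ (0:ℝ), ContinuousWithinAt f (Ici t) t)
    (hf_ll : ∀ t > (0:ℝ), Tendsto f (nhdsWithin t (Iio t)) (nhds (fm t)))
    (hf_nnj : ∀ t > (0:ℝ), fm t ≤ f t)
    (hf_pos : ∀ t ≥ (0:ℝ), 0 < f t)
    (i c h : ℝ → ℝ)
    (hi : ∀ t, i t = ∫ s in (0:ℝ)..t, (f s)⁻¹)
    (hi_int : ∀ t ≥ (0:ℝ), IntervalIntegrable (fun s => (f s)⁻¹) volume 0 t)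
    (hc : ∀ y, c y = sInf {t : ℝ | 0 ≤ t ∧ y < i t})
    (hh : h = f ∘ c)
    (hh_int : ∀ t ≥ (0:ℝ), IntervalIntegrable h volume 0 t) :
    ∀ t ≥ (0:ℝ), (∃ u ≥ (0:ℝ), t < i u) →
      h t = f (∫ s in (0:ℝ)..t, h s) ∧ c t = ∫ s in (0:ℝ)..t, h s :=
  lamperti_transform_solves_general f hf_rc hf_pos i c h hi hi_int hc hh hh_int
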